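/- Let 𝒜 be a complete normed algebra with unit over ℝ (or ℂ), and let A_k, A_p ∈ 𝒜. Define the curve γ : ℝ → 𝒜 by γ(t) = exp(−t A_k) · exp(t (A_k + A_p)). Then γ(0) = 1 and, for every t ∈ ℝ, γ is differentiable at t with derivative γ′(t) = (exp(−t A_k) · A_p · exp(t A_k)) · γ(t). (This is Jurdjevic's closed-form solution of the KP time-optimal control trajectory γ̇(t) = e^{−A_k t} A_p e^{A_k t} γ(t), γ(0) = 1.) -/

import Mathlib

/-!
By the product rule the curve `exp (-t x) * exp (t (x + y))` has derivative
`exp (-t x) * ((x + y) - x) * exp (t (x + y))`; inserting `exp (t x) * exp (-t x) = 1` after `y`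
rewrites this as the conjugate of `y` times the curve.
-/

open NormedSpace

theorem HasDerivAt.comp_rclikeOfReal {𝕜 : Type*} [RCLike 𝕜] {E : Type*} [NormedAddCommGroup E]
    [NormedSpace 𝕜 E] [NormedSpace ℝ E] [IsScalarTower ℝ 𝕜 E] {f : 𝕜 → E} {f' : E} {x : ℝ}
    (hf : HasDerivAt f f' (x : 𝕜)) : HasDerivAt (fun y : ℝ => f y) f' x := by
  simpa [Function.comp_def] using hf.scomp x (RCLike.ofRealCLM (K := 𝕜)).hasDerivAt

section ExpCurve

variable {𝕜 : Type*} [RCLike 𝕜] {𝒜 : Type*} [NormedRing 𝒜] [NormedAlgebra 𝕜 𝒜] [CompleteSpace 𝒜]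

theorem hasDerivAt_exp_neg_smul_mul_exp_smul (x y : 𝒜) (z : 𝕜) :
    HasDerivAt (fun w : 𝕜 => exp (-(w • x)) * exp (w • y))
      (exp (-(z • x)) * (y - x) * exp (z • y)) z := by
  have hleft := hasDerivAt_exp_smul_const (-x) z
  simp only [smul_neg] at hleft
  convert hleft.fun_mul (hasDerivAt_exp_smul_const' y z) using 1
  noncomm_ring

theorem hasDerivAt_exp_neg_smul_mul_exp_smul_add (x y : 𝒜) (z : 𝕜) :
    HasDerivAt (fun w : 𝕜 => exp (-(w • x)) * exp (w • (x + y)))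
      (exp (-(z • x)) * y * exp (z • x) * (exp (-(z • x)) * exp (z • (x + y)))) z := by
  have hinv : exp (z • x) * exp (-(z • x)) = 1 := by
    have hball : ∀ a : 𝒜, a ∈ Metric.eball 0 (expSeries 𝕜 𝒜).radius := fun a ↦
      (expSeries_radius_eq_top 𝕜 𝒜).symm ▸ edist_lt_top _ _
    rw [← exp_add_of_commute_of_mem_ball (Commute.refl _).neg_right (hball _) (hball _),
      add_neg_cancel, exp_zero]
  have hconj : exp (-(z • x)) * y * exp (z • x) * (exp (-(z • x)) * exp (z • (x + y)))
      = exp (-(z • x)) * (x + y - x) * exp (z • (x + y)) := by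
    rw [add_sub_cancel_left, mul_assoc _ (exp (z • x)), ← mul_assoc (exp (z • x)), hinv, one_mul]
  rw [hconj]
  exact hasDerivAt_exp_neg_smul_mul_exp_smul x (x + y) z

end ExpCurve

/-- Jurdjevic's closed-form solution of the KP time-optimal control problem:
the curve `γ t = exp(-t A_k) * exp(t (A_k + A_p))` satisfies `γ 0 = 1` and
`γ' t = (exp(-t A_k) * A_p * exp(t A_k)) * γ t`. -/
theorem jurdjevic_kp_solution {𝕜 : Type*} [RCLike 𝕜] {𝒜 : Type*} [NormedRing 𝒜]
    [NormedAlgebra 𝕜 𝒜] [CompleteSpace 𝒜] [NormedSpace ℝ 𝒜] [IsScalarTower ℝ 𝕜 𝒜]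
    (A_k A_p : 𝒜) (γ : ℝ → 𝒜)
    (hγ : γ = fun t : ℝ => exp (-((t : 𝕜) • A_k)) * exp ((t : 𝕜) • (A_k + A_p))) :
    γ 0 = 1 ∧ ∀ t : ℝ,
      HasDerivAt γ ((exp (-((t : 𝕜) • A_k)) * A_p * exp ((t : 𝕜) • A_k)) * γ t) t := by
  subst hγ
  refine ⟨by simp, fun t ↦ ?_⟩
  exact (hasDerivAt_exp_neg_smul_mul_exp_smul_add A_k A_p (t : 𝕜)).comp_rclikeOfReal
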